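/- A ring R is strongly nil-clean if and only if R is GSWNC and R is a UU-ring (every unit is unipotent, i.e., U(R) ⊆ 1 + Nil(R)). -/

import Mathlib

/-!
A unit `u = q + e` with `q` nilpotent commuting with the idempotent `e` forces `e = u - q` to be a
unit, hence `e = 1` and `u - 1 = q` is nilpotent. Conversely, in a UU-ring every unit `u` is
`(u - 1) + 1`, and `2 = 1 - (-1)` is nilpotent, so a decomposition `q - e` of a non-unit can be
rewritten as `(q - 2e) + e`.
-/

/-- An element is strongly weakly nil-clean. -/
def IsSWNC {R : Type*} [Ring R] (a : R) : Prop :=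
  ∃ q e : R, IsNilpotent q ∧ IsIdempotentElem e ∧ Commute q e ∧ (a = q + e ∨ a = q - e)

/-- A ring is GSWNC if every non-unit is strongly weakly nil-clean. -/
def IsGSWNC (R : Type*) [Ring R] : Prop :=
  ∀ a : R, ¬ IsUnit a → IsSWNC a

def IsStronglyNilClean {R : Type*} [Ring R] (a : R) : Prop :=
  ∃ q e : R, IsNilpotent q ∧ IsIdempotentElem e ∧ Commute q e ∧ a = q + e

section

variable {R : Type*} [Ring R]

theorem IsStronglyNilClean.isSWNC {a : R} (h : IsStronglyNilClean a) : IsSWNC a := by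
  obtain ⟨q, e, hq, he, hqe, ha⟩ := h
  exact ⟨q, e, hq, he, hqe, Or.inl ha⟩

theorem IsStronglyNilClean.isNilpotent_sub_one_of_isUnit {u : R} (h : IsStronglyNilClean u)
    (hu : IsUnit u) : IsNilpotent (u - 1) := by
  obtain ⟨q, e, hq, he, hqe, rfl⟩ := h
  have he_eq : e = q + e + -q := by abel
  have he_unit : IsUnit e := by
    rw [he_eq]
    exact hq.neg.isUnit_add_left_of_commute hu ((Commute.refl q).add_right hqe).neg_left
  rw [(IsIdempotentElem.iff_eq_one_of_isUnit he_unit).mp he, add_sub_cancel_right]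
  exact hq

theorem isStronglyNilClean_of_isNilpotent_sub_one {a : R} (h : IsNilpotent (a - 1)) :
    IsStronglyNilClean a :=
  ⟨a - 1, 1, h, .one, .one_right _, (sub_add_cancel a 1).symm⟩

theorem isNilpotent_two_of_forall_isNilpotent_units_sub_one
    (h : ∀ u : Rˣ, IsNilpotent ((u : R) - 1)) : IsNilpotent (2 : R) := by
  have h_neg_two : ((-1 : Rˣ) : R) - 1 = -2 := by norm_num
  simpa [h_neg_two, one_add_one_eq_two] using (h (-1)).neg

theorem IsSWNC.isStronglyNilClean (h2 : IsNilpotent (2 : R)) {a : R} (h : IsSWNC a) :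
    IsStronglyNilClean a := by
  obtain ⟨q, e, hq, he, hqe, ha | ha⟩ := h
  · exact ⟨q, e, hq, he, hqe, ha⟩
  · have h_two_e : IsNilpotent (2 * e) := (Commute.ofNat_left 2 e).isNilpotent_mul_right h2
    have hq_two_e : Commute q (2 * e) := (Commute.ofNat_right q 2).mul_right hqe
    refine ⟨q - 2 * e, e, hq_two_e.isNilpotent_sub hq h_two_e, he,
      hqe.sub_left ((Commute.ofNat_left 2 e).mul_left (.refl e)), ?_⟩
    rw [ha, two_mul]
    abel

end

theorem stmt14 {R : Type*} [Ring R] :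
    (∀ a : R, ∃ q e : R, IsNilpotent q ∧ IsIdempotentElem e ∧ Commute q e ∧ a = q + e) ↔
      (IsGSWNC R ∧ ∀ u : Rˣ, IsNilpotent ((u : R) - 1)) := by
  constructor
  · intro h
    exact ⟨fun a _ => IsStronglyNilClean.isSWNC (h a),
      fun u => IsStronglyNilClean.isNilpotent_sub_one_of_isUnit (h u) u.isUnit⟩
  · rintro ⟨hgswnc, hunits⟩ a
    by_cases ha : IsUnit a
    · obtain ⟨u, rfl⟩ := ha
      exact isStronglyNilClean_of_isNilpotent_sub_one (hunits u)
    · exact (hgswnc a ha).isStronglyNilClean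
        (isNilpotent_two_of_forall_isNilpotent_units_sub_one hunits)
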